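/- arXiv:2202.12647 — 7 statements merged into one kernel-verified Lean document; each statement's English description precedes it below -/
import Mathlib

section
/- Let X and Y be normed linear spaces over F (ℝ or ℂ), and let T, A be bounded linear operators from X to Y. Then the set Ω(T,A) := { λ ∈ F : there exist sequences (xₙ) in the unit sphere of X and (yₙ*) in the unit sphere of Y* such that yₙ*(T xₙ) → ‖T‖ and yₙ*(A xₙ) → λ } is a compact subset of F. -/
/-!
Ω(T, A) is the slice `{λ | (‖T‖, λ) ∈ closure W}` of the closure of the joint spatial numerical
range `W = {(y* (T x), y* (A x)) : x ∈ S_X, y* ∈ S_{Y*}}` in `𝕜 × 𝕜`. Since `W` is bounded, its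
closure is compact, and a closed slice of a compact set is compact.
-/

open Filter Topology Metric

section JointSpatialNumericalRange

variable {𝕜 X Y : Type*} [RCLike 𝕜] [NormedAddCommGroup X] [NormedSpace 𝕜 X]
  [NormedAddCommGroup Y] [NormedSpace 𝕜 Y]

def jointSpatialNumericalRange (T A : X →L[𝕜] Y) : Set (𝕜 × 𝕜) :=
  {p | ∃ (x : X) (y : Y →L[𝕜] 𝕜), ‖x‖ = 1 ∧ ‖y‖ = 1 ∧ (y (T x), y (A x)) = p}

lemma norm_apply_apply_le_of_norm_eq_one (T : X →L[𝕜] Y) {x : X} {y : Y →L[𝕜] 𝕜}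
    (hx : ‖x‖ = 1) (hy : ‖y‖ = 1) : ‖y (T x)‖ ≤ ‖T‖ := by
  simpa [hy] using y.le_opNorm_of_le (T.unit_le_opNorm x hx.le)

lemma jointSpatialNumericalRange_subset_closedBall_prod (T A : X →L[𝕜] Y) :
    jointSpatialNumericalRange T A ⊆ closedBall 0 ‖T‖ ×ˢ closedBall 0 ‖A‖ := by
  rintro _ ⟨x, y, hx, hy, rfl⟩
  simp only [Set.mem_prod, mem_closedBall_zero_iff]
  exact ⟨norm_apply_apply_le_of_norm_eq_one T hx hy, norm_apply_apply_le_of_norm_eq_one A hx hy⟩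

lemma isCompact_closure_jointSpatialNumericalRange (T A : X →L[𝕜] Y) :
    IsCompact (closure (jointSpatialNumericalRange T A)) :=
  ((isBounded_closedBall.prod isBounded_closedBall).subset
    (jointSpatialNumericalRange_subset_closedBall_prod T A)).isCompact_closure

lemma mem_closure_jointSpatialNumericalRange_iff (T A : X →L[𝕜] Y) (a b : 𝕜) :
    (a, b) ∈ closure (jointSpatialNumericalRange T A) ↔
      ∃ (x : ℕ → X) (y : ℕ → (Y →L[𝕜] 𝕜)), (∀ n, ‖x n‖ = 1) ∧ (∀ n, ‖y n‖ = 1) ∧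
        Tendsto (fun n => y n (T (x n))) atTop (𝓝 a) ∧
        Tendsto (fun n => y n (A (x n))) atTop (𝓝 b) := by
  rw [mem_closure_iff_seq_limit]
  constructor
  · rintro ⟨u, hu, hlim⟩
    choose x y hx hy hxy using hu
    obtain rfl : u = fun n => (y n (T (x n)), y n (A (x n))) := funext fun n => (hxy n).symm
    exact ⟨x, y, hx, hy, hlim.fst_nhds, hlim.snd_nhds⟩
  · rintro ⟨x, y, hx, hy, hTa, hAb⟩
    exact ⟨_, fun n => ⟨x n, y n, hx n, hy n, rfl⟩, hTa.prodMk_nhds hAb⟩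

end JointSpatialNumericalRange

lemma isCompact_preimage_prodMk_of_isCompact_of_isClosed {α β : Type*} [TopologicalSpace α]
    [TopologicalSpace β] {K : Set (α × β)} (hK : IsCompact K) (hK' : IsClosed K) (a : α) :
    IsCompact (Prod.mk a ⁻¹' K) :=
  (hK.image continuous_snd).of_isClosed_subset (hK'.preimage (Continuous.prodMk_right a))
    fun b hb => ⟨(a, b), hb, rfl⟩

theorem stmt0 {𝕜 X Y : Type*} [RCLike 𝕜] [NormedAddCommGroup X] [NormedSpace 𝕜 X]
    [NormedAddCommGroup Y] [NormedSpace 𝕜 Y] (T A : X →L[𝕜] Y) :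
    IsCompact {lam : 𝕜 | ∃ (x : ℕ → X) (y : ℕ → (Y →L[𝕜] 𝕜)),
      (∀ n, ‖x n‖ = 1) ∧ (∀ n, ‖y n‖ = 1) ∧
      Tendsto (fun n => y n (T (x n))) atTop (𝓝 (‖T‖ : 𝕜)) ∧
      Tendsto (fun n => y n (A (x n))) atTop (𝓝 lam)} := by
  simp_rw [← mem_closure_jointSpatialNumericalRange_iff]
  exact isCompact_preimage_prodMk_of_isCompact_of_isClosed
    (isCompact_closure_jointSpatialNumericalRange T A) isClosed_closure _
end

section
/- Let X and Y be normed linear spaces over F (ℝ or ℂ), and let T, A be nonzero bounded linear operators from X to Y. Then T is Birkhoff-James orthogonal to A (i.e., ‖T + λA‖ ≥ ‖T‖ for all scalars λ) if and only if 0 belongs to the convex hull of the set Ω(T,A) := { λ ∈ F : there exist sequences (xₙ) in S_X and (yₙ*) in S_{Y*} with yₙ*(T xₙ) → ‖T‖ and yₙ*(A xₙ) → λ }. -/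
/-! The set Ω(T, A) is the slice at first coordinate ‖T‖ of the closure of the joint values
{(y*(T x), y*(A x)) : x ∈ S_X, y* ∈ S_{Y*}}, hence compact. Every λ ∈ Ω satisfies
‖T‖ + Re(μλ) ≤ ‖T + μA‖, a real half-plane condition on λ, so it passes to the convex hull, and
0 ∈ conv Ω gives ‖T‖ ≤ ‖T + μA‖. Conversely, if T ⊥_B A then for every μ, norming pairs of
T + tμA with t → 0 accumulate at some λ ∈ Ω with Re(μλ) ≥ 0, so no real functional separates 0
from the compact convex set conv Ω. -/

open Filter Topology Set RCLike

theorem isCompact_convexHull {E : Type*} [NormedAddCommGroup E]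
    [NormedSpace ℝ E] [FiniteDimensional ℝ E] {s : Set E} (hs : IsCompact s) :
    IsCompact (convexHull ℝ s) := by
  rcases s.eq_empty_or_nonempty with rfl | ⟨p, hp⟩
  · simp
  set d := Module.finrank ℝ E + 1
  suffices convexHull ℝ s = (fun q : (Fin d → ℝ) × (Fin d → E) => ∑ i, q.1 i • q.2 i) ''
      (stdSimplex ℝ (Fin d) ×ˢ univ.pi fun _ => s) by
    rw [this]
    exact ((isCompact_stdSimplex ℝ _).prod (isCompact_univ_pi fun _ => hs)).image (by fun_prop)
  refine Subset.antisymm (fun x hx => ?_) ?_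
  · obtain ⟨ι, _, z, w, hzs, hind, hw0, hw1, rfl⟩ := eq_pos_convex_span_of_mem_convexHull hx
    have hcard : Fintype.card ι ≤ d :=
      hind.card_le_finrank_succ.trans (Nat.succ_le_succ (Submodule.finrank_le _))
    -- pad the Carathéodory representation with zero weights on the point `p`
    let e : Fin d ≃ ι ⊕ Fin (d - Fintype.card ι) :=
      (Fintype.equivFinOfCardEq (by rw [Fintype.card_sum, Fintype.card_fin]; omega)).symm
    refine ⟨(fun j => Sum.elim w 0 (e j), fun j => Sum.elim z (fun _ => p) (e j)),
      ⟨⟨fun j => ?_, ?_⟩, fun j _ => ?_⟩, ?_⟩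
    · dsimp only
      rcases e j with i | i
      exacts [(hw0 i).le, le_rfl]
    · simpa [e.sum_comp (fun u => Sum.elim w 0 u)] using hw1
    · dsimp only
      rcases e j with i | i
      exacts [hzs (mem_range_self i), hp]
    · simp [e.sum_comp (fun u => Sum.elim w 0 u • Sum.elim z (fun _ => p) u)]
  · rintro _ ⟨⟨w, z⟩, ⟨hw, hz⟩, rfl⟩
    exact (convex_convexHull ℝ s).sum_mem (fun i _ => hw.1 i) hw.2
      fun i _ => subset_convexHull ℝ s (hz i (mem_univ i))

section BirkhoffJames

variable {𝕜 X Y : Type*} [RCLike 𝕜] [NormedAddCommGroup X] [NormedSpace 𝕜 X]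
  [NormedAddCommGroup Y] [NormedSpace 𝕜 Y]

lemma ContinuousLinearMap.norm_apply_apply_le (B : X →L[𝕜] Y) {x : X} (hx : ‖x‖ = 1)
    {g : Y →L[𝕜] 𝕜} (hg : ‖g‖ = 1) : ‖g (B x)‖ ≤ ‖B‖ :=
  (g.le_opNorm _).trans <| by simpa [hg, hx] using B.le_opNorm x

def jointValues (T A : X →L[𝕜] Y) : Set (𝕜 × 𝕜) :=
  {p | ∃ x : X, ‖x‖ = 1 ∧ ∃ g : Y →L[𝕜] 𝕜, ‖g‖ = 1 ∧ p = (g (T x), g (A x))}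

variable {T A : X →L[𝕜] Y}

lemma norm_mul_add_mul_le_of_mem_closure_jointValues {p : 𝕜 × 𝕜}
    (hp : p ∈ closure (jointValues T A)) (α β : 𝕜) :
    ‖α * p.1 + β * p.2‖ ≤ ‖α • T + β • A‖ := by
  refine closure_minimal (t := {p | ‖α * p.1 + β * p.2‖ ≤ ‖α • T + β • A‖}) ?_
    (isClosed_le (by fun_prop) continuous_const) hp
  rintro _ ⟨x, hx, g, hg, rfl⟩
  simpa using (α • T + β • A).norm_apply_apply_le hx hg

lemma isBounded_jointValues (T A : X →L[𝕜] Y) : Bornology.IsBounded (jointValues T A) := by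
  refine isBounded_iff_forall_norm_le.2 ⟨max ‖T‖ ‖A‖, fun p hp => norm_prod_le_iff.2 ⟨?_, ?_⟩⟩
  · simpa using (norm_mul_add_mul_le_of_mem_closure_jointValues (subset_closure hp) 1 0).trans
      (le_max_left _ _)
  · simpa using (norm_mul_add_mul_le_of_mem_closure_jointValues (subset_closure hp) 0 1).trans
      (le_max_right _ _)

def normingLimits (T A : X →L[𝕜] Y) : Set 𝕜 :=
  {lam | ((‖T‖ : 𝕜), lam) ∈ closure (jointValues T A)}

lemma setOf_tendsto_eq_normingLimits (T A : X →L[𝕜] Y) :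
    {lam : 𝕜 | ∃ (x : ℕ → X) (y : ℕ → (Y →L[𝕜] 𝕜)),
      (∀ n, ‖x n‖ = 1) ∧ (∀ n, ‖y n‖ = 1) ∧
      Tendsto (fun n => y n (T (x n))) atTop (𝓝 (‖T‖ : 𝕜)) ∧
      Tendsto (fun n => y n (A (x n))) atTop (𝓝 lam)} = normingLimits T A := by
  ext lam
  simp only [normingLimits, mem_ofPred_eq, mem_closure_iff_seq_limit]
  constructor
  · rintro ⟨x, y, hx, hy, hT, hA⟩
    exact ⟨_, fun n => ⟨x n, hx n, y n, hy n, rfl⟩, hT.prodMk_nhds hA⟩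
  · rintro ⟨p, hp, hlim⟩
    choose x hx y hy hp using hp
    obtain rfl : p = fun n => (y n (T (x n)), y n (A (x n))) := funext hp
    exact ⟨x, y, hx, hy, (Prod.tendsto_iff _ _).1 hlim⟩

lemma isCompact_normingLimits (T A : X →L[𝕜] Y) : IsCompact (normingLimits T A) := by
  refine Metric.isCompact_of_isClosed_isBounded (isClosed_closure.preimage (by fun_prop)) ?_
  refine (Metric.isBounded_closedBall (x := 0) (r := ‖A‖)).subset fun lam hlam => ?_
  simpa using norm_mul_add_mul_le_of_mem_closure_jointValues hlam 0 1

lemma norm_add_re_mul_le_of_mem_normingLimits {lam : 𝕜} (hlam : lam ∈ normingLimits T A)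
    (μ : 𝕜) : ‖T‖ + re (μ * lam) ≤ ‖T + μ • A‖ := by
  simpa using (re_le_norm _).trans (norm_mul_add_mul_le_of_mem_closure_jointValues hlam 1 μ)

lemma exists_mem_jointValues_lt_re (hT : T ≠ 0) {μ : 𝕜} (h : ‖T‖ ≤ ‖T + μ • A‖) {ε : ℝ}
    (hε : 0 < ε) : ∃ p ∈ jointValues T A, ‖T‖ - ε < re (p.1 + μ * p.2) := by
  set B := T + μ • A
  have hB : (‖T‖ - ε).toNNReal < ‖B‖₊ := by
    rw [← NNReal.coe_lt_coe, Real.coe_toNNReal', coe_nnnorm]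
    exact max_lt (by linarith) ((norm_pos_iff.2 hT).trans_le h)
  obtain ⟨x, hx, hBx⟩ := B.exists_nnnorm_eq_one_lt_apply_of_lt_opNNNorm hB
  rw [← NNReal.coe_lt_coe, Real.coe_toNNReal', coe_nnnorm] at hBx
  obtain ⟨g, hg, hgBx⟩ := exists_dual_vector 𝕜 (B x) ((le_max_right _ _).trans_lt hBx).ne'
  refine ⟨_, ⟨x, by simpa using congrArg NNReal.toReal hx, g, hg, rfl⟩, ?_⟩
  rw [show g (T x) + μ * g (A x) = g (B x) by simp [B], hgBx, ofReal_re]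
  exact (le_max_left _ _).trans_lt hBx

lemma exists_mem_jointValues_approx (hT : T ≠ 0) (h : ∀ lam : 𝕜, ‖T‖ ≤ ‖T + lam • A‖) (μ : 𝕜)
    {t : ℝ} (ht : 0 < t) :
    ∃ p ∈ jointValues T A, ‖T‖ - t ^ 2 - t * re (μ * p.2) < re p.1 ∧ -t < re (μ * p.2) := by
  obtain ⟨p, hp, hlt⟩ := exists_mem_jointValues_lt_re hT (h ((t : 𝕜) * μ)) (pow_pos ht 2)
  have hp1 : re p.1 ≤ ‖T‖ := (re_le_norm _).trans <| by
    simpa using norm_mul_add_mul_le_of_mem_closure_jointValues (subset_closure hp) 1 0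
  rw [mul_assoc, map_add, re_ofReal_mul] at hlt
  exact ⟨p, hp, by linarith, lt_of_mul_lt_mul_left (by nlinarith) ht.le⟩

lemma exists_mem_normingLimits_re_mul_nonneg (hT : T ≠ 0) (h : ∀ lam : 𝕜, ‖T‖ ≤ ‖T + lam • A‖)
    (μ : 𝕜) : ∃ lam ∈ normingLimits T A, 0 ≤ re (μ * lam) := by
  choose p hp hp1 hp2 using fun n : ℕ =>
    exists_mem_jointValues_approx hT h μ (Nat.one_div_pos_of_nat (n := n))
  obtain ⟨q, hq, φ, hφ, hlim⟩ := tendsto_subseq_of_bounded (isBounded_jointValues T A) hp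
  have ht : Tendsto (fun n => 1 / ((φ n : ℝ) + 1)) atTop (𝓝 0) :=
    tendsto_one_div_add_atTop_nhds_zero_nat.comp hφ.tendsto_atTop
  have hre1 : Tendsto (fun n => re (p (φ n)).1) atTop (𝓝 (re q.1)) :=
    ((continuous_re.comp continuous_fst).tendsto q).comp hlim
  have hre2 : Tendsto (fun n => re (μ * (p (φ n)).2)) atTop (𝓝 (re (μ * q.2))) :=
    ((continuous_re.comp (continuous_const.mul continuous_snd)).tendsto q).comp hlim
  have hq1 : ‖T‖ ≤ re q.1 := le_of_tendsto_of_tendsto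
    (by simpa using (tendsto_const_nhds.sub (ht.pow 2)).sub (ht.mul hre2)) hre1
    (Eventually.of_forall fun n => (hp1 (φ n)).le)
  have hq2 : 0 ≤ re (μ * q.2) := le_of_tendsto_of_tendsto (by simpa using ht.neg) hre2
    (Eventually.of_forall fun n => (hp2 (φ n)).le)
  have hnorm : ‖q.1‖ ≤ ‖T‖ := by
    simpa using norm_mul_add_mul_le_of_mem_closure_jointValues hq 1 0
  have hq_fst : q.1 = ‖T‖ := by
    rw [norm_le_re_iff_eq_norm.1 (hnorm.trans hq1), le_antisymm hnorm (hq1.trans (re_le_norm _))]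
  refine ⟨q.2, ?_, hq2⟩
  rw [normingLimits, mem_ofPred_eq, ← hq_fst]
  exact hq

end BirkhoffJames

theorem stmt1_general {𝕜 X Y : Type*} [RCLike 𝕜] [NormedAddCommGroup X] [NormedSpace 𝕜 X]
    [NormedAddCommGroup Y] [NormedSpace 𝕜 Y] (T A : X →L[𝕜] Y)
    (hT : T ≠ 0) :
    (∀ lam : 𝕜, ‖T‖ ≤ ‖T + lam • A‖) ↔
      (0 : 𝕜) ∈ convexHull ℝ {lam : 𝕜 | ∃ (x : ℕ → X) (y : ℕ → (Y →L[𝕜] 𝕜)),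
        (∀ n, ‖x n‖ = 1) ∧ (∀ n, ‖y n‖ = 1) ∧
        Tendsto (fun n => y n (T (x n))) atTop (𝓝 (‖T‖ : 𝕜)) ∧
        Tendsto (fun n => y n (A (x n))) atTop (𝓝 lam)} := by
  rw [setOf_tendsto_eq_normingLimits]
  refine ⟨fun h => ?_, fun h0 μ => ?_⟩
  · by_contra h0
    obtain ⟨f, u, hf, hu⟩ := geometric_hahn_banach_closed_point (𝕜 := 𝕜) (convex_convexHull ℝ _)
      (isCompact_convexHull (isCompact_normingLimits T A)).isClosed h0
    obtain ⟨lam, hlam, hre⟩ := exists_mem_normingLimits_re_mul_nonneg hT h (f 1)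
    have hf_apply : f lam = f 1 * lam := by simpa [mul_comm] using f.map_smul lam 1
    have hlt := hf lam (subset_convexHull ℝ _ hlam)
    rw [hf_apply] at hlt
    rw [map_zero, map_zero] at hu
    linarith
  · have hlin : IsLinearMap ℝ fun lam : 𝕜 => re (μ * lam) :=
      ⟨fun a b => by simp [mul_add], fun r a => by rw [mul_smul_comm, smul_re, smul_eq_mul]⟩
    have hsub : normingLimits T A ⊆ {lam | re (μ * lam) ≤ ‖T + μ • A‖ - ‖T‖} := fun lam hlam =>
      le_sub_iff_add_le'.2 (norm_add_re_mul_le_of_mem_normingLimits hlam μ)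
    simpa using convexHull_min hsub (convex_halfSpace_le hlin _) h0

theorem stmt1 {𝕜 X Y : Type*} [RCLike 𝕜] [NormedAddCommGroup X] [NormedSpace 𝕜 X]
    [NormedAddCommGroup Y] [NormedSpace 𝕜 Y] (T A : X →L[𝕜] Y)
    (hT : T ≠ 0) (hA : A ≠ 0) :
    (∀ lam : 𝕜, ‖T‖ ≤ ‖T + lam • A‖) ↔
      (0 : 𝕜) ∈ convexHull ℝ {lam : 𝕜 | ∃ (x : ℕ → X) (y : ℕ → (Y →L[𝕜] 𝕜)),
        (∀ n, ‖x n‖ = 1) ∧ (∀ n, ‖y n‖ = 1) ∧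
        Tendsto (fun n => y n (T (x n))) atTop (𝓝 (‖T‖ : 𝕜)) ∧
        Tendsto (fun n => y n (A (x n))) atTop (𝓝 lam)} :=
  stmt1_general T A hT
end

section
/- Let X_1, …, X_k and Y be finite-dimensional Banach spaces, and let T, A be nonzero bounded k-linear maps from X_1 × ⋯ × X_k to Y. Then the sequential set Ω(T,A) := { λ : ∃ sequences ((x⃗ₙ, yₙ*)) with yₙ*(T x⃗ₙ) → ‖T‖ and yₙ*(A x⃗ₙ) → λ } equals the set Ω'(T,A) := { y*(A x⃗) : x⃗ ∈ M_T, y* ∈ J(T x⃗) }, where M_T is the norm attainment set of T and J(z) is the set of norm-one support functionals at z. -/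
/-! The unit spheres of the finite-dimensional spaces `X i` and of the dual of `Y` are compact,
so the image of their product under the continuous map `(x, y) ↦ (y (T x), y (A x))` is closed.
A sequential limit `(‖T‖, λ)` therefore has the form `(y (T x), y (A x))` with unit vectors `x i`
and a unit functional `y`, and `‖T‖ = ‖y (T x)‖ ≤ ‖T x‖ ≤ ‖T‖` forces `x ∈ M_T` and `y ∈ J(T x)`.
Conversely, constant sequences realise every element of `Ω'(T, A)`. -/

open Filter Topology

theorem IsCompact.mem_image_of_tendsto {Z E : Type*} [TopologicalSpace Z] [TopologicalSpace E]
    [T2Space E] {K : Set Z} (hK : IsCompact K) {f : Z → E} (hf : ContinuousOn f K)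
    {z : ℕ → Z} (hz : ∀ n, z n ∈ K) {a : E} (h : Tendsto (fun n => f (z n)) atTop (𝓝 a)) :
    a ∈ f '' K :=
  (hK.image_of_continuousOn hf).isClosed.mem_of_tendsto h
    (Eventually.of_forall fun n => Set.mem_image_of_mem f (hz n))

theorem ContinuousMultilinearMap.norm_apply_eq_opNorm_of_dual_apply_eq {𝕜 ι : Type*} [RCLike 𝕜]
    [Fintype ι] {E : ι → Type*} [∀ i, SeminormedAddCommGroup (E i)] [∀ i, NormedSpace 𝕜 (E i)]
    {G : Type*} [SeminormedAddCommGroup G] [NormedSpace 𝕜 G]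
    (f : ContinuousMultilinearMap 𝕜 E G) {m : ∀ i, E i} (hm : ∀ i, ‖m i‖ ≤ 1)
    {y : G →L[𝕜] 𝕜} (hy : ‖y‖ ≤ 1) (hym : y (f m) = (‖f‖ : 𝕜)) : ‖f m‖ = ‖f‖ := by
  refine le_antisymm (f.unit_le_opNorm ((pi_norm_le_iff_of_nonneg zero_le_one).2 hm)) ?_
  calc ‖f‖ = ‖y (f m)‖ := by rw [hym, RCLike.norm_ofReal, abs_of_nonneg f.opNorm_nonneg]
    _ ≤ ‖y‖ * ‖f m‖ := y.le_opNorm _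
    _ ≤ ‖f m‖ := mul_le_of_le_one_left (norm_nonneg _) hy

theorem stmt3_general {𝕜 : Type*} [RCLike 𝕜] {k : ℕ} {X : Fin k → Type*}
    [∀ i, NormedAddCommGroup (X i)] [∀ i, NormedSpace 𝕜 (X i)]
    [∀ i, FiniteDimensional 𝕜 (X i)]
    {Y : Type*} [NormedAddCommGroup Y] [NormedSpace 𝕜 Y] [FiniteDimensional 𝕜 Y]
    (T A : ContinuousMultilinearMap 𝕜 X Y) :
    {lam : 𝕜 | ∃ (x : ℕ → ∀ i, X i) (y : ℕ → (Y →L[𝕜] 𝕜)),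
        (∀ n i, ‖x n i‖ = 1) ∧ (∀ n, ‖y n‖ = 1) ∧
        Tendsto (fun n => y n (T (x n))) atTop (𝓝 (‖T‖ : 𝕜)) ∧
        Tendsto (fun n => y n (A (x n))) atTop (𝓝 lam)}
      = {lam : 𝕜 | ∃ (x : ∀ i, X i) (y : Y →L[𝕜] 𝕜),
        (∀ i, ‖x i‖ = 1) ∧ ‖T x‖ = ‖T‖ ∧ ‖y‖ = 1 ∧
        y (T x) = (‖T x‖ : 𝕜) ∧ lam = y (A x)} := by
  ext lam
  constructor
  · rintro ⟨x, y, hx, hy, hTlim, hAlim⟩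
    let K := (Set.univ.pi fun i => Metric.sphere (0 : X i) 1) ×ˢ Metric.sphere (0 : Y →L[𝕜] 𝕜) 1
    have _ : ∀ i, ProperSpace (X i) := fun i => FiniteDimensional.proper 𝕜 (X i)
    have _ : ProperSpace (Y →L[𝕜] 𝕜) := FiniteDimensional.proper 𝕜 _
    have hK : IsCompact K :=
      (isCompact_univ_pi fun _ => isCompact_sphere 0 1).prod (isCompact_sphere 0 1)
    have hf : Continuous fun p : (∀ i, X i) × (Y →L[𝕜] 𝕜) => (p.2 (T p.1), p.2 (A p.1)) :=
      (continuous_snd.clm_apply (T.cont.comp continuous_fst)).prodMk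
        (continuous_snd.clm_apply (A.cont.comp continuous_fst))
    obtain ⟨⟨x₀, y₀⟩, ⟨hx₀, hy₀⟩, hlim⟩ := hK.mem_image_of_tendsto hf.continuousOn
      (z := fun n => (x n, y n)) (fun n => ⟨fun i _ => by simpa using hx n i, by simpa using hy n⟩)
      (hTlim.prodMk_nhds hAlim)
    obtain ⟨hTx₀, hAx₀⟩ := Prod.ext_iff.1 hlim
    dsimp only at hTx₀ hAx₀
    simp only [Set.mem_univ_pi, mem_sphere_iff_norm, sub_zero] at hx₀ hy₀
    have hnorm : ‖T x₀‖ = ‖T‖ :=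
      T.norm_apply_eq_opNorm_of_dual_apply_eq (fun i => (hx₀ i).le) hy₀.le hTx₀
    exact ⟨x₀, y₀, hx₀, hnorm, hy₀, by rw [hnorm, hTx₀], hAx₀.symm⟩
  · rintro ⟨x, y, hx, hTx, hy, hyTx, rfl⟩
    refine ⟨fun _ => x, fun _ => y, fun _ => hx, fun _ => hy, ?_, tendsto_const_nhds⟩
    show Tendsto (fun _ => y (T x)) atTop _
    rw [hyTx, hTx]
    exact tendsto_const_nhds

theorem stmt3 {𝕜 : Type*} [RCLike 𝕜] {k : ℕ} {X : Fin k → Type*}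
    [∀ i, NormedAddCommGroup (X i)] [∀ i, NormedSpace 𝕜 (X i)]
    [∀ i, FiniteDimensional 𝕜 (X i)]
    {Y : Type*} [NormedAddCommGroup Y] [NormedSpace 𝕜 Y] [FiniteDimensional 𝕜 Y]
    (T A : ContinuousMultilinearMap 𝕜 X Y) (hT : T ≠ 0) (hA : A ≠ 0) :
    {lam : 𝕜 | ∃ (x : ℕ → ∀ i, X i) (y : ℕ → (Y →L[𝕜] 𝕜)),
        (∀ n i, ‖x n i‖ = 1) ∧ (∀ n, ‖y n‖ = 1) ∧
        Tendsto (fun n => y n (T (x n))) atTop (𝓝 (‖T‖ : 𝕜)) ∧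
        Tendsto (fun n => y n (A (x n))) atTop (𝓝 lam)}
      = {lam : 𝕜 | ∃ (x : ∀ i, X i) (y : Y →L[𝕜] 𝕜),
        (∀ i, ‖x i‖ = 1) ∧ ‖T x‖ = ‖T‖ ∧ ‖y‖ = 1 ∧
        y (T x) = (‖T x‖ : 𝕜) ∧ lam = y (A x)} :=
  stmt3_general T A
end

section
/- Let H be a finite-dimensional Hilbert space and let T, A be nonzero linear operators on H. Then T ⊥_B A if and only if there exists a unit vector x₀ ∈ H with ‖T x₀‖ = ‖T‖ and ⟨A x₀, T x₀⟩ = 0. -/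
/-!
The vectors `x` with `‖T x‖ = ‖T‖ * ‖x‖` form a subspace `V` (parallelogram law), and by the
Toeplitz–Hausdorff theorem the set `W` of values `⟪T x, A x⟫` over unit vectors `x ∈ V` is
convex; it is also compact. If `T ⊥_B A`, then for every direction `c` maximising vectors of
`T + t c A` with `t → 0⁺` accumulate at a unit `x ∈ V` with `re (c ⟪T x, A x⟫) ≥ 0`, so `W` meets
every closed half-plane through `0`; a compact convex set of `𝕜` with this property contains `0`
(compare with its point of least norm). Conversely, `⟪A x₀, T x₀⟫ = 0` gives
`‖(T + λ A) x₀‖² = ‖T x₀‖² + |λ|² ‖A x₀‖² ≥ ‖T‖²` by Pythagoras.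
-/

open RCLike Metric ComplexConjugate Filter Topology

section NumericalRange

variable {𝕜 E : Type*} [RCLike 𝕜] [NormedAddCommGroup E] [InnerProductSpace 𝕜 E]

def numericalRange (B : E →ₗ⋆[𝕜] E →ₗ[𝕜] 𝕜) : Set 𝕜 := (fun x => B x x) '' sphere 0 1

lemma exists_norm_eq_one_conj_mul_add_eq (α β : 𝕜) :
    ∃ u : 𝕜, ‖u‖ = 1 ∧ conj (u * α + conj u * β) = u * α + conj u * β := by
  obtain ⟨u, hu, hd⟩ := exists_norm_eq_mul_self (α - conj β)
  refine ⟨u, hu, ?_⟩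
  have hd' := congrArg conj hd
  simp only [conj_ofReal, map_mul, map_sub, conj_conj] at hd'
  simp only [map_add, map_mul, conj_conj]
  linear_combination hd - hd'

lemma sesqForm_smul_add_smul_self (B : E →ₗ⋆[𝕜] E →ₗ[𝕜] 𝕜) (x y : E) (t r : ℝ) :
    B ((t : 𝕜) • x + (r : 𝕜) • y) ((t : 𝕜) • x + (r : 𝕜) • y) =
      (t * t : ℝ) * B x x + (t * r : ℝ) * (B x y + B y x) + (r * r : ℝ) * B y y := by
  simp only [map_add, map_smulₛₗ, LinearMap.add_apply, LinearMap.smul_apply, smul_eq_mul,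
    RingHom.id_apply, conj_ofReal]
  push_cast
  ring

lemma div_norm_sq_mem_numericalRange (B : E →ₗ⋆[𝕜] E →ₗ[𝕜] 𝕜) {z : E} (hz : z ≠ 0) :
    B z z / (‖z‖ ^ 2 : ℝ) ∈ numericalRange B := by
  refine ⟨((‖z‖⁻¹ : ℝ) : 𝕜) • z, by simpa using norm_smul_inv_norm (𝕜 := 𝕜) hz, ?_⟩
  simp only [map_smulₛₗ, LinearMap.smul_apply, smul_eq_mul, conj_ofReal, RingHom.id_apply]
  push_cast
  field_simp

lemma eq_neg_of_smul_add_one_sub_smul_eq_zero {x y : E} (hx : ‖x‖ = 1) (hy : ‖y‖ = 1)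
    {t : ℝ} (ht0 : 0 ≤ t) (ht1 : t ≤ 1) (h : (t : 𝕜) • x + ((1 - t : ℝ) : 𝕜) • y = 0) :
    x = -y := by
  have hxy : (t : 𝕜) • x = -(((1 - t : ℝ) : 𝕜) • y) := eq_neg_of_add_eq_zero_left h
  have ht : t = 1 - t := by
    have := congrArg norm hxy
    rwa [norm_neg, norm_smul, norm_smul, norm_ofReal, norm_ofReal, hx, hy, mul_one, mul_one,
      abs_of_nonneg ht0, abs_of_nonneg (sub_nonneg.2 ht1)] at this
  rw [← ht, ← smul_neg] at hxy
  exact smul_right_injective E (by norm_cast; linarith) hxy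

lemma ofReal_mem_numericalRange_of_apply_eq_one_of_apply_eq_zero
    {B : E →ₗ⋆[𝕜] E →ₗ[𝕜] 𝕜} {x y : E} (hx : ‖x‖ = 1) (hy : ‖y‖ = 1)
    (hBx : B x x = 1) (hBy : B y y = 0) {s : ℝ} (hs0 : 0 ≤ s) (hs1 : s ≤ 1) :
    (s : 𝕜) ∈ numericalRange B := by
  -- rotating `y` by a phase makes the cross term of `B` on the segment from `y` to `x` real
  obtain ⟨u, hu, hreal⟩ := exists_norm_eq_one_conj_mul_add_eq (B x y) (B y x)
  set y' := u • y
  have hy' : ‖y'‖ = 1 := by rw [norm_smul, hu, hy, one_mul]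
  have hBy' : B y' y' = 0 := by simp [y', hBy]
  obtain ⟨K, hK⟩ : ∃ K : ℝ, B x y' + B y' x = K := by
    refine ⟨_, (conj_eq_iff_re.1 ?_).symm⟩
    simpa [y'] using hreal
  set z : ℝ → E := fun t => (t : 𝕜) • x + ((1 - t : ℝ) : 𝕜) • y'
  have hBz : ∀ t, B (z t) (z t) = (t * t + t * (1 - t) * K : ℝ) := fun t => by
    simp only [z, sesqForm_smul_add_smul_self, hBx, hBy', hK]
    push_cast
    ring
  set g : ℝ → ℝ := fun t => t * t + t * (1 - t) * K - s * ‖z t‖ ^ 2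
  have hg : ContinuousOn g (Set.Icc 0 1) := by fun_prop
  have hg0 : g 0 ≤ 0 := by simp [g, z, hy', hs0]
  have hg1 : 0 ≤ g 1 := by simp [g, z, hx, hs1]
  obtain ⟨t, ⟨ht0, ht1⟩, hgt⟩ := intermediate_value_Icc zero_le_one hg ⟨hg0, hg1⟩
  have hz : z t ≠ 0 := fun h => by
    have := eq_neg_of_smul_add_one_sub_smul_eq_zero hx hy' ht0 ht1 h
    simp [this, hBy'] at hBx
  have hs : s = (t * t + t * (1 - t) * K) / ‖z t‖ ^ 2 := by
    field_simp
    linarith [hgt]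
  simpa [hs, hBz] using div_norm_sq_mem_numericalRange B hz

lemma add_mul_sub_mem_numericalRange {B : E →ₗ⋆[𝕜] E →ₗ[𝕜] 𝕜} {a b : 𝕜}
    (ha : a ∈ numericalRange B) (hb : b ∈ numericalRange B) {s : ℝ} (hs0 : 0 ≤ s) (hs1 : s ≤ 1) :
    b + s * (a - b) ∈ numericalRange B := by
  obtain ⟨x, hx, rfl⟩ := ha
  obtain ⟨y, hy, rfl⟩ := hb
  rw [mem_sphere_zero_iff_norm] at hx hy
  dsimp only
  rcases eq_or_ne (B x x) (B y y) with hab | hab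
  · rw [hab, sub_self, mul_zero, add_zero]
    exact ⟨y, by simpa using hy, rfl⟩
  set C := (B x x - B y y)⁻¹ • (B - B y y • innerₛₗ 𝕜)
  have hBC : ∀ z, B z z = B y y * ‖z‖ ^ 2 + (B x x - B y y) * C z z := fun z => by
    simp only [C, LinearMap.smul_apply, LinearMap.sub_apply, innerₛₗ_apply_apply, smul_eq_mul,
      inner_self_eq_norm_sq_to_K]
    field_simp [sub_ne_zero.2 hab]
    ring
  have hCx : C x x = 1 := by
    simp [C, inner_self_eq_norm_sq_to_K, hx, sub_ne_zero.2 hab]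
  have hCy : C y y = 0 := by
    simp [C, inner_self_eq_norm_sq_to_K, hy]
  obtain ⟨w, hw, hCw⟩ :=
    ofReal_mem_numericalRange_of_apply_eq_one_of_apply_eq_zero hx hy hCx hCy hs0 hs1
  refine ⟨w, hw, ?_⟩
  rw [mem_sphere_zero_iff_norm] at hw
  simp only [hBC w, hCw, hw]
  push_cast
  ring

theorem convex_numericalRange (B : E →ₗ⋆[𝕜] E →ₗ[𝕜] 𝕜) : Convex ℝ (numericalRange B) := by
  intro a ha b hb p q hp hq hpq
  convert add_mul_sub_mem_numericalRange ha hb hp (by linarith) using 1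
  rw [eq_sub_of_add_eq' hpq, real_smul_eq_coe_mul, real_smul_eq_coe_mul]
  push_cast
  ring

end NumericalRange

lemma RCLike.zero_mem_of_forall_exists_re_mul_nonneg {𝕜 : Type*} [RCLike 𝕜] {K : Set 𝕜}
    (hK : IsCompact K) (hKc : Convex ℝ K) (h : ∀ c : 𝕜, ∃ w ∈ K, 0 ≤ re (c * w)) : 0 ∈ K := by
  obtain ⟨w, hwK, -⟩ := h 0
  obtain ⟨w₀, hw₀K, hmin⟩ := exists_norm_eq_iInf_of_complete_convex ⟨w, hwK⟩ hK.isComplete hKc 0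
  obtain ⟨w, hwK, hw⟩ := h (-conj w₀)
  have hvar := (norm_eq_iInf_iff_real_inner_le_zero hKc hw₀K).1 hmin w hwK
  have hexp : re ((w - w₀) * conj (0 - w₀)) = re (-conj w₀ * w) + ‖w₀‖ ^ 2 := by
    rw [show (w - w₀) * conj (0 - w₀) = -conj w₀ * w + conj w₀ * w₀ by simp; ring, map_add,
      conj_mul, ← ofReal_pow, ofReal_re]
  rw [real_inner_eq_re_inner 𝕜, inner_apply, hexp] at hvar
  have hw₀ : ‖w₀‖ = 0 := by nlinarith [norm_nonneg w₀]
  rwa [norm_eq_zero.1 hw₀] at hw₀K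

lemma IsCompact.exists_nonneg_of_forall_pos_exists_ge {X : Type*} [TopologicalSpace X]
    {K : Set X} (hK : IsCompact K) {f : X → ℝ} (hf : ContinuousOn f K) (M : ℝ)
    (h : ∀ t > 0, ∃ x ∈ K, -(t * M) ≤ f x) : ∃ x ∈ K, 0 ≤ f x := by
  obtain ⟨y, hyK, -⟩ := h 1 one_pos
  obtain ⟨x, hxK, hmax⟩ := hK.exists_isMaxOn ⟨y, hyK⟩ hf
  refine ⟨x, hxK, le_of_tendsto (f := fun t => -(t * M)) (x := 𝓝[>] 0) ?_ ?_⟩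
  · exact (Continuous.tendsto' (by fun_prop) 0 0 (by simp)).mono_left nhdsWithin_le_nhds
  · filter_upwards [self_mem_nhdsWithin] with t ht
    obtain ⟨z, hzK, hz⟩ := h t ht
    exact hz.trans (hmax hzK)

section NormAttaining

variable {𝕜 E F : Type*} [RCLike 𝕜] [NormedAddCommGroup E] [NormedSpace 𝕜 E]
  [FiniteDimensional 𝕜 E] [Nontrivial E]

lemma ContinuousLinearMap.exists_norm_eq_one_norm_apply_eq_opNorm [NormedAddCommGroup F]
    [NormedSpace 𝕜 F] (T : E →L[𝕜] F) : ∃ x, ‖x‖ = 1 ∧ ‖T x‖ = ‖T‖ := by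
  have : ProperSpace E := FiniteDimensional.proper_rclike 𝕜 E
  have hne : (sphere (0 : E) 1).Nonempty :=
    Set.nonempty_coe_sort.1 (NormedSpace.sphere_nonempty_rclike 𝕜 zero_le_one)
  obtain ⟨x, hx, hTx⟩ := ((isCompact_sphere (0 : E) 1).image T.continuous.norm).sSup_mem
    (hne.image _)
  exact ⟨x, mem_sphere_zero_iff_norm.1 hx, hTx.trans T.sSup_sphere_eq_norm⟩

variable [NormedAddCommGroup F] [InnerProductSpace 𝕜 F]

local notation "⟪" x ", " y "⟫" => inner 𝕜 x y

lemma exists_approx_norm_attaining_re_mul_inner_ge {T A : E →L[𝕜] F}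
    (h : ∀ lam : 𝕜, ‖T‖ ≤ ‖T + lam • A‖) (c : 𝕜) {t : ℝ} (ht : 0 < t) :
    ∃ x, ‖x‖ = 1 ∧ ‖T‖ - t * (‖c‖ * ‖A‖) ≤ ‖T x‖ ∧
      -(t * (‖c‖ * ‖A‖) ^ 2 / 2) ≤ re (c * ⟪T x, A x⟫) := by
  obtain ⟨x, hx, hSx⟩ := (T + ((t : 𝕜) * c) • A).exists_norm_eq_one_norm_apply_eq_opNorm
  have hTS : ‖T‖ ≤ ‖T x + ((t : 𝕜) * c) • A x‖ := (h _).trans_eq hSx.symm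
  have hTx : ‖T x‖ ≤ ‖T‖ := by simpa [hx] using T.le_opNorm x
  have hAx : ‖A x‖ ≤ ‖A‖ := by simpa [hx] using A.le_opNorm x
  have hv : ‖((t : 𝕜) * c) • A x‖ ≤ t * (‖c‖ * ‖A‖) := by
    rw [norm_smul, norm_mul, norm_ofReal, abs_of_pos ht, mul_assoc]
    gcongr
  refine ⟨x, hx, by linarith [hTS.trans (norm_add_le _ _)], ?_⟩
  have hexp := norm_add_sq (𝕜 := 𝕜) (T x) (((t : 𝕜) * c) • A x)
  rw [inner_smul_right, mul_assoc, re_ofReal_mul] at hexp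
  have hsq : ‖T‖ ^ 2 ≤ ‖T x + ((t : 𝕜) * c) • A x‖ ^ 2 := by gcongr
  have hv2 : ‖((t : 𝕜) * c) • A x‖ ^ 2 ≤ (t * (‖c‖ * ‖A‖)) ^ 2 := by gcongr
  have hTx2 : ‖T x‖ ^ 2 ≤ ‖T‖ ^ 2 := by gcongr
  nlinarith

lemma exists_norm_attaining_re_mul_inner_nonneg {T A : E →L[𝕜] F}
    (h : ∀ lam : 𝕜, ‖T‖ ≤ ‖T + lam • A‖) (c : 𝕜) :
    ∃ x, ‖x‖ = 1 ∧ ‖T x‖ = ‖T‖ ∧ 0 ≤ re (c * ⟪T x, A x⟫) := by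
  have : ProperSpace E := FiniteDimensional.proper_rclike 𝕜 E
  obtain ⟨x, hx, hfx⟩ := (isCompact_sphere (0 : E) 1).exists_nonneg_of_forall_pos_exists_ge
    (f := fun x => min (‖T x‖ - ‖T‖) (re (c * ⟪T x, A x⟫))) (by fun_prop)
    (‖c‖ * ‖A‖ + (‖c‖ * ‖A‖) ^ 2) fun t ht => by
      obtain ⟨y, hy, h₁, h₂⟩ := exists_approx_norm_attaining_re_mul_inner_ge h c ht
      have hm := mul_nonneg ht.le (mul_nonneg (norm_nonneg c) (norm_nonneg A))
      have hm2 := mul_nonneg ht.le (sq_nonneg (‖c‖ * ‖A‖))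
      exact ⟨y, mem_sphere_zero_iff_norm.2 hy, le_min (by linarith) (by linarith)⟩
  rw [mem_sphere_zero_iff_norm] at hx
  have hTx : ‖T x‖ ≤ ‖T‖ := by simpa [hx] using T.le_opNorm x
  exact ⟨x, hx, le_antisymm hTx (by linarith [min_le_left _ _ |>.trans' hfx]),
    hfx.trans (min_le_right _ _)⟩

end NormAttaining

section NormAttainingSubspace

variable {𝕜 E F : Type*} [RCLike 𝕜] [NormedAddCommGroup E] [InnerProductSpace 𝕜 E]
  [NormedAddCommGroup F] [InnerProductSpace 𝕜 F]

lemma ContinuousLinearMap.norm_map_add_eq_of_norm_map_eq (T : E →L[𝕜] F) {x y : E}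
    (hx : ‖T x‖ = ‖T‖ * ‖x‖) (hy : ‖T y‖ = ‖T‖ * ‖y‖) : ‖T (x + y)‖ = ‖T‖ * ‖x + y‖ := by
  have hT := parallelogram_law_with_norm 𝕜 (T x) (T y)
  have hxy := parallelogram_law_with_norm 𝕜 x y
  rw [← map_add, ← map_sub, hx, hy] at hT
  have hsub := T.le_opNorm (x - y)
  refine le_antisymm (T.le_opNorm _) ((sq_le_sq₀ (by positivity) (norm_nonneg _)).1 ?_)
  linarith [pow_le_pow_left₀ (norm_nonneg _) hsub 2, congrArg (‖T‖ ^ 2 * ·) hxy]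

def ContinuousLinearMap.normAttainingSubspace (T : E →L[𝕜] F) : Submodule 𝕜 E where
  carrier := {x | ‖T x‖ = ‖T‖ * ‖x‖}
  add_mem' := T.norm_map_add_eq_of_norm_map_eq
  zero_mem' := by simp
  smul_mem' c x (hx : ‖T x‖ = ‖T‖ * ‖x‖) := by
    change ‖T (c • x)‖ = ‖T‖ * ‖c • x‖
    rw [map_smul, norm_smul, norm_smul, hx, mul_left_comm]

end NormAttainingSubspace

lemma norm_le_norm_add_smul_of_inner_eq_zero {𝕜 E F : Type*} [RCLike 𝕜] [NormedAddCommGroup E]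
    [NormedSpace 𝕜 E] [NormedAddCommGroup F] [InnerProductSpace 𝕜 F] {T A : E →L[𝕜] F} {x : E}
    (hx : ‖x‖ = 1) (hTx : ‖T x‖ = ‖T‖) (hAT : inner 𝕜 (A x) (T x) = 0) (lam : 𝕜) :
    ‖T‖ ≤ ‖T + lam • A‖ := by
  have hpyth := norm_add_sq_eq_norm_sq_add_norm_sq_of_inner_eq_zero (T x) (lam • A x)
    (by rw [inner_smul_right, inner_eq_zero_symm.1 hAT, mul_zero])
  calc ‖T‖ = ‖T x‖ := hTx.symm
    _ ≤ ‖T x + lam • A x‖ := by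
      rw [mul_self_le_mul_self_iff (norm_nonneg _) (norm_nonneg _), hpyth]
      exact le_add_of_nonneg_right (mul_self_nonneg _)
    _ ≤ ‖T + lam • A‖ := by simpa [hx] using (T + lam • A).le_opNorm x

theorem stmt8_general {𝕜 H : Type*} [RCLike 𝕜] [NormedAddCommGroup H]
    [InnerProductSpace 𝕜 H] [FiniteDimensional 𝕜 H]
    (T A : H →L[𝕜] H) (hT : T ≠ 0) :
    (∀ lam : 𝕜, ‖T‖ ≤ ‖T + lam • A‖) ↔
      ∃ x₀ : H, ‖x₀‖ = 1 ∧ ‖T x₀‖ = ‖T‖ ∧ (inner 𝕜 (A x₀) (T x₀) : 𝕜) = 0 := by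
  refine ⟨fun h => ?_, fun ⟨x₀, hx₀, hTx₀, hAT⟩ =>
    norm_le_norm_add_smul_of_inner_eq_zero hx₀ hTx₀ hAT⟩
  obtain ⟨y, hTy⟩ := DFunLike.ne_iff.1 hT
  have : Nontrivial H := nontrivial_of_ne y 0 fun hy => hTy (by simp [hy])
  set V := T.normAttainingSubspace
  set B : V →ₗ⋆[𝕜] V →ₗ[𝕜] 𝕜 :=
    ((innerₛₗ 𝕜).comp ((T : H →ₗ[𝕜] H) ∘ₗ V.subtype)).compl₂ ((A : H →ₗ[𝕜] H) ∘ₗ V.subtype)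
  have hB : IsCompact (numericalRange B) := (isCompact_sphere 0 1).image
    (show Continuous fun v : V => inner 𝕜 (T v) (A v) by fun_prop)
  have hdir : ∀ c : 𝕜, ∃ w ∈ numericalRange B, 0 ≤ re (c * w) := fun c => by
    obtain ⟨x, hx, hTx, hre⟩ := exists_norm_attaining_re_mul_inner_nonneg h c
    have hxV : x ∈ V := show ‖T x‖ = ‖T‖ * ‖x‖ by rw [hx, hTx, mul_one]
    exact ⟨_, ⟨⟨x, hxV⟩, by simpa using hx, rfl⟩, hre⟩
  obtain ⟨v, hv, hBv⟩ := zero_mem_of_forall_exists_re_mul_nonneg hB (convex_numericalRange B) hdir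
  rw [mem_sphere_zero_iff_norm] at hv
  have hTv : ‖T v‖ = ‖T‖ * ‖(v : H)‖ := v.2
  rw [show ‖(v : H)‖ = 1 from hv, mul_one] at hTv
  exact ⟨v, hv, hTv, inner_eq_zero_symm.1 hBv⟩

theorem stmt8 {𝕜 H : Type*} [RCLike 𝕜] [NormedAddCommGroup H]
    [InnerProductSpace 𝕜 H] [FiniteDimensional 𝕜 H]
    (T A : H →L[𝕜] H) (hT : T ≠ 0) (hA : A ≠ 0) :
    (∀ lam : 𝕜, ‖T‖ ≤ ‖T + lam • A‖) ↔
      ∃ x₀ : H, ‖x₀‖ = 1 ∧ ‖T x₀‖ = ‖T‖ ∧ (inner 𝕜 (A x₀) (T x₀) : 𝕜) = 0 :=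
  stmt8_general T A hT
end

section
/- Let X_1, …, X_k, Y be normed linear spaces and T a nonzero bounded k-linear map. Then T is smooth if and only if Ω(T,A) is a singleton for every bounded k-linear map A, where Ω(T,A) := { λ : ∃ sequences (x⃗ₙ) in S_{X_1} × ⋯ × S_{X_k} and (yₙ*) in S_{Y*} with yₙ*(T x⃗ₙ) → ‖T‖ and yₙ*(A x⃗ₙ) → λ }. -/
/-!
Write `T ⊥ A` for Birkhoff–James orthogonality. Evaluating `T + c • A` along norming sequences
shows that `0 ∈ Ω(T, A)` implies `T ⊥ A`. Conversely, if `T ⊥ A` then for every `μ` some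
`λ ∈ Ω(T, A)` has `0 ≤ re (μ λ)`: almost norming pairs of the perturbations `T + t μ A`, `t → 0`,
are norming for `T`, and orthogonality forces `re (μ A)` to be almost nonnegative along them.
With `μ = -conj λ₀` this rules out `Ω(T, A) = {λ₀}` unless `λ₀ = 0`.

If every `Ω(T, ·)` is a singleton, additivity follows because `Ω(T, ·)` is nonempty and
`Ω(T, A₁ + A₂) ⊆ Ω(T, A₁) + Ω(T, A₂)` (pass to subsequences). If orthogonality is additive and
`z, λ ∈ Ω(T, A)`, then `A - (z / ‖T‖) T` and `(λ / ‖T‖) T - A` are orthogonal to `T`, hence so is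
their sum `((λ - z) / ‖T‖) T`, which forces `λ = z`.
-/

open Filter Topology

def BirkhoffJamesOrthogonal (𝕜 : Type*) {E : Type*} [RCLike 𝕜] [NormedAddCommGroup E]
    [NormedSpace 𝕜 E] (x y : E) : Prop :=
  ∀ c : 𝕜, ‖x‖ ≤ ‖x + c • y‖

lemma BirkhoffJamesOrthogonal.eq_zero_of_smul_self {𝕜 E : Type*} [RCLike 𝕜]
    [NormedAddCommGroup E] [NormedSpace 𝕜 E] {x : E} (hx : x ≠ 0) {c : 𝕜}
    (h : BirkhoffJamesOrthogonal 𝕜 x (c • x)) : c = 0 := by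
  by_contra hc
  have := h (-c⁻¹)
  rw [smul_smul, neg_mul, inv_mul_cancel₀ hc, neg_one_smul, add_neg_cancel, norm_zero] at this
  exact hx (norm_le_zero_iff.1 this)

lemma RCLike.tendsto_ofReal_of_tendsto_re {𝕜 α : Type*} [RCLike 𝕜] {l : Filter α} {z : α → 𝕜}
    {M : ℝ} (hz : ∀ a, ‖z a‖ ≤ M) (hre : Tendsto (fun a => re (z a)) l (𝓝 M)) :
    Tendsto z l (𝓝 (M : 𝕜)) := by
  rw [tendsto_iff_norm_sub_tendsto_zero]
  have hbound : ∀ a, ‖z a - M‖ ≤ √(2 * M * (M - re (z a))) := fun a => by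
    refine Real.le_sqrt_of_sq_le ?_
    have hsq : ‖z a - M‖ ^ 2 = (re (z a) - M) ^ 2 + im (z a) ^ 2 := by
      rw [RCLike.norm_sq_eq_def]; simp [sq]
    have hza : re (z a) ^ 2 + im (z a) ^ 2 ≤ M ^ 2 := by
      nlinarith [RCLike.norm_sq_eq_def (z := z a), hz a, norm_nonneg (z a)]
    nlinarith
  have hlim : Tendsto (fun a => √(2 * M * (M - re (z a)))) l (𝓝 0) := by
    simpa using ((tendsto_const_nhds (x := M).sub hre).const_mul (2 * M)).sqrt
  exact squeeze_zero (fun _ => norm_nonneg _) hbound hlim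

namespace ContinuousMultilinearMap

variable {𝕜 : Type*} [RCLike 𝕜] {ι : Type*} [Fintype ι] {X : ι → Type*}
  [∀ i, NormedAddCommGroup (X i)] [∀ i, NormedSpace 𝕜 (X i)]
  {Y : Type*} [NormedAddCommGroup Y] [NormedSpace 𝕜 Y]

lemma opNorm_le_of_forall_norm_eq_one (f : ContinuousMultilinearMap 𝕜 X Y) {c : ℝ} (hc : 0 ≤ c)
    (h : ∀ x : ∀ i, X i, (∀ i, ‖x i‖ = 1) → ‖f x‖ ≤ c) : ‖f‖ ≤ c := by
  refine f.opNorm_le_bound hc fun m => ?_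
  by_cases hm : ∃ i, m i = 0
  · obtain ⟨i, hi⟩ := hm
    rw [f.map_coord_zero i hi, norm_zero]
    positivity
  push Not at hm
  set u : ∀ i, X i := fun i => (‖m i‖⁻¹ : 𝕜) • m i
  have hmu : m = fun i => (‖m i‖ : 𝕜) • u i := funext fun i => by
    rw [smul_smul, mul_inv_cancel₀ (by simpa using hm i), one_smul]
  calc ‖f m‖ = (∏ i, ‖m i‖) * ‖f u‖ := by
        conv_lhs => rw [hmu, f.map_smul_univ, norm_smul, norm_prod]
        simp
    _ ≤ (∏ i, ‖m i‖) * c := by gcongr; exact h u fun i => norm_smul_inv_norm (hm i)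
    _ = c * ∏ i, ‖m i‖ := mul_comm _ _

lemma exists_norm_apply_gt (f : ContinuousMultilinearMap 𝕜 X Y) {c : ℝ} (hc₀ : 0 ≤ c)
    (hc : c < ‖f‖) : ∃ x : ∀ i, X i, (∀ i, ‖x i‖ = 1) ∧ c < ‖f x‖ := by
  by_contra! h
  exact hc.not_ge (f.opNorm_le_of_forall_norm_eq_one hc₀ h)

lemma norm_dual_apply_le (f : ContinuousMultilinearMap 𝕜 X Y) {x : ∀ i, X i}
    (hx : ∀ i, ‖x i‖ = 1) {y : Y →L[𝕜] 𝕜} (hy : ‖y‖ = 1) : ‖y (f x)‖ ≤ ‖f‖ :=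
  calc ‖y (f x)‖ ≤ ‖y‖ * ‖f x‖ := y.le_opNorm _
    _ ≤ 1 * (‖f‖ * ∏ i, ‖x i‖) := by rw [hy]; gcongr; exact f.le_opNorm x
    _ = ‖f‖ := by simp [hx]

lemma exists_norming_pair (f : ContinuousMultilinearMap 𝕜 X Y) (hf : f ≠ 0) {ε : ℝ}
    (hε : 0 < ε) : ∃ (x : ∀ i, X i) (y : Y →L[𝕜] 𝕜), (∀ i, ‖x i‖ = 1) ∧ ‖y‖ = 1 ∧
      y (f x) = ‖f x‖ ∧ ‖f‖ - ε < ‖f x‖ := by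
  obtain ⟨x, hx, hlt⟩ := f.exists_norm_apply_gt (le_max_left 0 (‖f‖ - ε))
    (max_lt (norm_pos_iff.2 hf) (by linarith))
  have hfx : ‖f x‖ ≠ 0 := ((le_max_left _ _).trans_lt hlt).ne'
  obtain ⟨y, hy, hyfx⟩ := exists_dual_vector 𝕜 (f x) hfx
  exact ⟨x, y, hx, hy, hyfx, (le_max_right _ _).trans_lt hlt⟩

/-- The set `Ω(T, A)` of the paper. -/
def normingLimits (T A : ContinuousMultilinearMap 𝕜 X Y) : Set 𝕜 :=
  {lam | ∃ (x : ℕ → ∀ i, X i) (y : ℕ → (Y →L[𝕜] 𝕜)),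
    (∀ n i, ‖x n i‖ = 1) ∧ (∀ n, ‖y n‖ = 1) ∧
    Tendsto (fun n => y n (T (x n))) atTop (𝓝 (‖T‖ : 𝕜)) ∧
    Tendsto (fun n => y n (A (x n))) atTop (𝓝 lam)}

variable {T A : ContinuousMultilinearMap 𝕜 X Y}

lemma exists_mem_normingLimits_subseq {x : ℕ → ∀ i, X i} {y : ℕ → (Y →L[𝕜] 𝕜)}
    (hx : ∀ n i, ‖x n i‖ = 1) (hy : ∀ n, ‖y n‖ = 1)
    (hT : Tendsto (fun n => y n (T (x n))) atTop (𝓝 (‖T‖ : 𝕜)))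
    (A : ContinuousMultilinearMap 𝕜 X Y) :
    ∃ lam ∈ normingLimits T A, ∃ φ : ℕ → ℕ, StrictMono φ ∧
      Tendsto (fun n => y (φ n) (A (x (φ n)))) atTop (𝓝 lam) := by
  obtain ⟨lam, -, φ, hφ, hlim⟩ := tendsto_subseq_of_bounded (Metric.isBounded_closedBall (x := 0))
    fun n => mem_closedBall_zero_iff.2 (A.norm_dual_apply_le (hx n) (hy n))
  exact ⟨lam, ⟨x ∘ φ, y ∘ φ, fun n => hx (φ n), fun n => hy (φ n),
    hT.comp hφ.tendsto_atTop, hlim⟩, φ, hφ, hlim⟩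

lemma normingLimits_nonempty (hT : T ≠ 0) (A : ContinuousMultilinearMap 𝕜 X Y) :
    (normingLimits T A).Nonempty := by
  choose x y hx hy hyT hlow using fun n : ℕ =>
    T.exists_norming_pair hT (Nat.one_div_pos_of_nat (α := ℝ) (n := n))
  have hnorm : Tendsto (fun n => ‖T (x n)‖) atTop (𝓝 ‖T‖) := by
    refine tendsto_of_tendsto_of_tendsto_of_le_of_le ?_ tendsto_const_nhds
      (fun n => (hlow n).le) fun n => by simpa [hx n] using T.le_opNorm (x n)
    simpa using tendsto_const_nhds.sub (tendsto_one_div_add_atTop_nhds_zero_nat (𝕜 := ℝ))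
  have hT' : Tendsto (fun n => y n (T (x n))) atTop (𝓝 (‖T‖ : 𝕜)) := by
    simpa only [hyT, Function.comp_def] using (RCLike.continuous_ofReal.tendsto _).comp hnorm
  obtain ⟨lam, hlam, -⟩ := exists_mem_normingLimits_subseq hx hy hT' A
  exact ⟨lam, hlam⟩

lemma norm_add_re_mul_le_of_mem_normingLimits {lam : 𝕜} (h : lam ∈ normingLimits T A) (c : 𝕜) :
    ‖T‖ + RCLike.re (c * lam) ≤ ‖T + c • A‖ := by
  obtain ⟨x, y, hx, hy, hT, hA⟩ := h
  have hbound (n : ℕ) : RCLike.re (y n (T (x n)) + c * y n (A (x n))) ≤ ‖T + c • A‖ := by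
    have hy_add : y n (T (x n)) + c * y n (A (x n)) = y n ((T + c • A) (x n)) := by simp
    rw [hy_add]
    exact (RCLike.re_le_norm _).trans ((T + c • A).norm_dual_apply_le (hx n) (hy n))
  simpa using le_of_tendsto' ((RCLike.continuous_re.tendsto _).comp (hT.add (hA.const_mul c)))
    hbound

lemma birkhoffJamesOrthogonal_of_zero_mem_normingLimits (h : 0 ∈ normingLimits T A) :
    BirkhoffJamesOrthogonal 𝕜 T A := fun c => by
  simpa using norm_add_re_mul_le_of_mem_normingLimits h c

lemma smul_add_smul_self_mem_normingLimits {lam : 𝕜} (h : lam ∈ normingLimits T A) (a b : 𝕜) :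
    a * lam + b * ‖T‖ ∈ normingLimits T (a • A + b • T) := by
  obtain ⟨x, y, hx, hy, hT, hA⟩ := h
  exact ⟨x, y, hx, hy, hT, by simpa using (hA.const_mul a).add (hT.const_mul b)⟩

lemma exists_sub_mem_normingLimits_of_add_mem {A₁ A₂ : ContinuousMultilinearMap 𝕜 X Y} {lam : 𝕜}
    (h : lam ∈ normingLimits T (A₁ + A₂)) :
    ∃ lam₁ ∈ normingLimits T A₁, lam - lam₁ ∈ normingLimits T A₂ := by
  obtain ⟨x, y, hx, hy, hT, hA⟩ := h
  obtain ⟨lam₁, hlam₁, φ, hφ, hA₁⟩ := exists_mem_normingLimits_subseq hx hy hT A₁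
  refine ⟨lam₁, hlam₁, x ∘ φ, y ∘ φ, fun n => hx (φ n), fun n => hy (φ n),
    hT.comp hφ.tendsto_atTop, ?_⟩
  simpa using (hA.comp hφ.tendsto_atTop).sub hA₁

lemma exists_almost_norming_of_birkhoffJamesOrthogonal (hT : T ≠ 0)
    (h : BirkhoffJamesOrthogonal 𝕜 T A) (μ : 𝕜) {t : ℝ} (ht : 0 < t) :
    ∃ (x : ∀ i, X i) (y : Y →L[𝕜] 𝕜), (∀ i, ‖x i‖ = 1) ∧ ‖y‖ = 1 ∧
      ‖T‖ - t * (t + ‖μ‖ * ‖A‖) ≤ RCLike.re (y (T x)) ∧ -t ≤ RCLike.re (μ * y (A x)) := by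
  -- the `t ^ 2` slack in the norming pair of `S` leaves `re (μ A)` an error of order `t`
  set S := T + ((t : 𝕜) * μ) • A
  have hTS : ‖T‖ ≤ ‖S‖ := h _
  have hS : S ≠ 0 := norm_pos_iff.1 ((norm_pos_iff.2 hT).trans_le hTS)
  obtain ⟨x, y, hx, hy, hyS, hlow⟩ := S.exists_norming_pair hS (pow_pos ht 2)
  have hsplit : ‖S x‖ = RCLike.re (y (T x)) + t * RCLike.re (μ * y (A x)) := by
    have := congrArg RCLike.re hyS
    simp only [S, add_apply, smul_apply, map_add, map_smul, smul_eq_mul, mul_assoc,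
      RCLike.re_ofReal_mul, RCLike.ofReal_re] at this
    exact this.symm
  have hμA : RCLike.re (μ * y (A x)) ≤ ‖μ‖ * ‖A‖ :=
    (RCLike.re_le_norm _).trans (by rw [norm_mul]; gcongr; exact A.norm_dual_apply_le hx hy)
  have hTx : RCLike.re (y (T x)) ≤ ‖T‖ :=
    (RCLike.re_le_norm _).trans (T.norm_dual_apply_le hx hy)
  refine ⟨x, y, hx, hy, by nlinarith [mul_le_mul_of_nonneg_left hμA ht.le], ?_⟩
  exact (lt_of_mul_lt_mul_left (by nlinarith) ht.le).le

lemma exists_mem_normingLimits_re_mul_nonneg (hT : T ≠ 0) (h : BirkhoffJamesOrthogonal 𝕜 T A)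
    (μ : 𝕜) : ∃ lam ∈ normingLimits T A, 0 ≤ RCLike.re (μ * lam) := by
  have ht0 : Tendsto (fun n : ℕ => (1 : ℝ) / (n + 1)) atTop (𝓝 0) :=
    tendsto_one_div_add_atTop_nhds_zero_nat
  choose x y hx hy hTlow hAlow using fun n : ℕ =>
    exists_almost_norming_of_birkhoffJamesOrthogonal hT h μ (Nat.one_div_pos_of_nat (n := n))
  have hTre : Tendsto (fun n => RCLike.re (y n (T (x n)))) atTop (𝓝 ‖T‖) := by
    refine tendsto_of_tendsto_of_tendsto_of_le_of_le ?_ tendsto_const_nhds hTlow fun n =>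
      (RCLike.re_le_norm _).trans (T.norm_dual_apply_le (hx n) (hy n))
    simpa using tendsto_const_nhds.sub (ht0.mul (ht0.add_const (‖μ‖ * ‖A‖)))
  obtain ⟨lam, hlam, φ, hφ, hA⟩ := exists_mem_normingLimits_subseq hx hy
    (RCLike.tendsto_ofReal_of_tendsto_re (fun n => T.norm_dual_apply_le (hx n) (hy n)) hTre) A
  refine ⟨lam, hlam, le_of_tendsto_of_tendsto' ?_
    ((RCLike.continuous_re.tendsto _).comp (hA.const_mul μ)) fun n => hAlow (φ n)⟩
  simpa using (ht0.comp hφ.tendsto_atTop).neg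

lemma eq_zero_of_normingLimits_eq_singleton (hT : T ≠ 0) (h : BirkhoffJamesOrthogonal 𝕜 T A)
    {lam₀ : 𝕜} (hΩ : normingLimits T A = {lam₀}) : lam₀ = 0 := by
  obtain ⟨lam, hlam, hre⟩ := exists_mem_normingLimits_re_mul_nonneg hT h (-starRingEnd 𝕜 lam₀)
  rw [hΩ, Set.mem_singleton_iff] at hlam
  rw [hlam, neg_mul, RCLike.conj_mul, map_neg, ← RCLike.ofReal_pow, RCLike.ofReal_re] at hre
  exact norm_eq_zero.1 (by nlinarith [norm_nonneg lam₀])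

lemma normingLimits_subsingleton (hT : T ≠ 0)
    (hadd : ∀ A₁ A₂ : ContinuousMultilinearMap 𝕜 X Y, BirkhoffJamesOrthogonal 𝕜 T A₁ →
      BirkhoffJamesOrthogonal 𝕜 T A₂ → BirkhoffJamesOrthogonal 𝕜 T (A₁ + A₂))
    (A : ContinuousMultilinearMap 𝕜 X Y) : (normingLimits T A).Subsingleton := by
  intro z hz lam hlam
  have hTn : (‖T‖ : 𝕜) ≠ 0 := by simpa using hT
  have h₁ := smul_add_smul_self_mem_normingLimits hz 1 (-(z / ‖T‖))
  have h₂ := smul_add_smul_self_mem_normingLimits hlam (-1) (lam / ‖T‖)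
  rw [show 1 * z + -(z / ‖T‖) * ‖T‖ = 0 by field_simp; ring] at h₁
  rw [show -1 * lam + lam / ‖T‖ * ‖T‖ = 0 by field_simp; ring] at h₂
  have hsum := hadd _ _ (birkhoffJamesOrthogonal_of_zero_mem_normingLimits h₁)
    (birkhoffJamesOrthogonal_of_zero_mem_normingLimits h₂)
  rw [show (1 : 𝕜) • A + -(z / ‖T‖) • T + ((-1 : 𝕜) • A + (lam / ‖T‖) • T)
    = ((lam - z) / ‖T‖) • T by module] at hsum
  have hc := hsum.eq_zero_of_smul_self hT
  rw [div_eq_zero_iff, sub_eq_zero] at hc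
  exact (hc.resolve_right hTn).symm

lemma birkhoffJamesOrthogonal_add (hT : T ≠ 0)
    (hΩ : ∀ A : ContinuousMultilinearMap 𝕜 X Y, ∃ lam₀, normingLimits T A = {lam₀})
    {A₁ A₂ : ContinuousMultilinearMap 𝕜 X Y} (h₁ : BirkhoffJamesOrthogonal 𝕜 T A₁)
    (h₂ : BirkhoffJamesOrthogonal 𝕜 T A₂) : BirkhoffJamesOrthogonal 𝕜 T (A₁ + A₂) := by
  obtain ⟨c₁, hc₁⟩ := hΩ A₁
  obtain ⟨c₂, hc₂⟩ := hΩ A₂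
  obtain ⟨lam, hlam⟩ := normingLimits_nonempty hT (A₁ + A₂)
  obtain ⟨lam₁, hlam₁, hlam₂⟩ := exists_sub_mem_normingLimits_of_add_mem hlam
  rw [hc₁, eq_zero_of_normingLimits_eq_singleton hT h₁ hc₁, Set.mem_singleton_iff] at hlam₁
  rw [hc₂, eq_zero_of_normingLimits_eq_singleton hT h₂ hc₂, Set.mem_singleton_iff, hlam₁,
    sub_zero] at hlam₂
  exact birkhoffJamesOrthogonal_of_zero_mem_normingLimits (hlam₂ ▸ hlam)

end ContinuousMultilinearMap

open ContinuousMultilinearMap in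
theorem stmt11 {𝕜 : Type*} [RCLike 𝕜] {k : ℕ} {X : Fin k → Type*}
    [∀ i, NormedAddCommGroup (X i)] [∀ i, NormedSpace 𝕜 (X i)]
    {Y : Type*} [NormedAddCommGroup Y] [NormedSpace 𝕜 Y]
    (T : ContinuousMultilinearMap 𝕜 X Y) (hT : T ≠ 0) :
    (∀ A₁ A₂ : ContinuousMultilinearMap 𝕜 X Y, (∀ lam : 𝕜, ‖T‖ ≤ ‖T + lam • A₁‖) →
      (∀ lam : 𝕜, ‖T‖ ≤ ‖T + lam • A₂‖) → (∀ lam : 𝕜, ‖T‖ ≤ ‖T + lam • (A₁ + A₂)‖)) ↔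
    (∀ A : ContinuousMultilinearMap 𝕜 X Y, ∃ lam₀ : 𝕜,
      {lam : 𝕜 | ∃ (x : ℕ → ∀ i, X i) (y : ℕ → (Y →L[𝕜] 𝕜)),
        (∀ n i, ‖x n i‖ = 1) ∧ (∀ n, ‖y n‖ = 1) ∧
        Tendsto (fun n => y n (T (x n))) atTop (𝓝 (‖T‖ : 𝕜)) ∧
        Tendsto (fun n => y n (A (x n))) atTop (𝓝 lam)} = {lam₀}) :=
  ⟨fun hadd A => Set.exists_eq_singleton_iff_nonempty_subsingleton.2
      ⟨normingLimits_nonempty hT A, normingLimits_subsingleton hT hadd A⟩,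
    fun hΩ _ _ h₁ h₂ => birkhoffJamesOrthogonal_add hT hΩ h₁ h₂⟩
end

section
/- Let Y be a normed linear space and T a nonzero bounded k-linear map into Y with the property: whenever T ⊥_B A, then [A x⃗ₙ, T x⃗ₙ]ₙ → 0 for every sequence (x⃗ₙ) in the product of unit spheres with ‖T x⃗ₙ‖ → ‖T‖ and every sequence of semi-inner-products ([·,·]ₙ) on Y compatible with the norm. Then T is smooth, i.e., T ⊥_B A₁ and T ⊥_B A₂ imply T ⊥_B (A₁ + A₂). -/
/-!
Take a norming sequence `x n` of `T` and any semi-inner-product `[·,·]` compatible with the norm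
(one exists by Giles' construction from norming functionals). The hypothesis gives
`[Aᵢ (x n), T (x n)] → 0` for `i = 1, 2`, hence `[(A₁ + A₂) (x n), T (x n)] → 0` by additivity.
Conversely, such a limit forces Birkhoff–James orthogonality: by Cauchy–Schwarz,
`‖T + λ A‖ ‖T (x n)‖ ≥ ‖[(T + λ A) (x n), T (x n)]‖ = ‖‖T (x n)‖² + λ [A (x n), T (x n)]‖ → ‖T‖²`.
-/

open Filter Topology

/-- A semi-inner-product (in the sense of Giles-Lumer) on a normed space `Y`,
compatible with the norm. -/
structure SIP (𝕜 Y : Type*) [RCLike 𝕜] [NormedAddCommGroup Y] [NormedSpace 𝕜 Y] where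
  toFun : Y → Y → 𝕜
  add_left : ∀ x y z, toFun (x + y) z = toFun x z + toFun y z
  smul_left : ∀ (a : 𝕜) (x z : Y), toFun (a • x) z = a * toFun x z
  smul_right : ∀ (a : 𝕜) (x z : Y), toFun x (a • z) = starRingEnd 𝕜 a * toFun x z
  norm_compat : ∀ x, toFun x x = (‖x‖ : 𝕜) ^ 2
  cauchy_schwarz : ∀ x z, ‖toFun x z‖ ≤ ‖x‖ * ‖z‖

theorem exists_smul_orbitRep_eq (G α : Type*) [GroupWithZero G] [MulAction G α] :
    ∃ (r : α → α) (c : α → G), (∀ z, c z ≠ 0 ∧ c z • r z = z) ∧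
      ∀ a : G, a ≠ 0 → ∀ z, r (a • z) = r z := by
  let r : α → α := fun z => (⟦z⟧ : MulAction.orbitRel.Quotient Gˣ α).out
  have hr : ∀ z, ∃ c : G, c ≠ 0 ∧ c • r z = z := fun z => by
    obtain ⟨u, hu⟩ := Quotient.mk_out (s := MulAction.orbitRel Gˣ α) z
    refine ⟨(u⁻¹ : Gˣ), Units.ne_zero _, ?_⟩
    rw [show r z = u • z from hu.symm, ← Units.smul_def, inv_smul_smul]
  choose c hc using hr
  exact ⟨r, c, hc, fun a ha z =>
    congrArg Quotient.out (MulAction.orbitRel.Quotient.quotient_smul_eq (g := Units.mk0 a ha))⟩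

/-- Giles' construction: `[x, z] = conj c * ‖r‖ * g_r x`, where `z = c • r` with `r` the chosen
representative of the ray of `z` and `g_r` a norming functional of `r`. Choosing along rays is what
makes the form conjugate-homogeneous in `z`. -/
instance SIP.instNonempty {𝕜 Y : Type*} [RCLike 𝕜] [NormedAddCommGroup Y] [NormedSpace 𝕜 Y] :
    Nonempty (SIP 𝕜 Y) := by
  obtain ⟨r, c, hc, hr⟩ := exists_smul_orbitRep_eq 𝕜 Y
  choose g hg_norm hg_apply using fun y : Y => exists_dual_vector'' 𝕜 y
  have norm_eq z : ‖z‖ = ‖c z‖ * ‖r z‖ := by rw [← norm_smul, (hc z).2]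
  let s : Y → Y → 𝕜 := fun x z => starRingEnd 𝕜 (c z) * ‖r z‖ * g (r z) x
  have norm_s_le x z : ‖s x z‖ ≤ ‖x‖ * ‖z‖ := by
    rw [norm_mul, norm_mul, RCLike.norm_conj, RCLike.norm_ofReal, abs_norm, ← norm_eq, mul_comm]
    exact mul_le_mul_of_nonneg_right ((g _).le_of_opNorm_le (hg_norm _) x |>.trans_eq (one_mul _))
      (norm_nonneg z)
  refine ⟨⟨s, fun x y z => by simp only [s, map_add, mul_add],
    fun a x z => by simp only [s, map_smul, smul_eq_mul]; ring, fun a x z => ?_, fun z => ?_,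
    norm_s_le⟩⟩
  · rcases eq_or_ne a 0 with rfl | ha
    · simpa [norm_le_zero_iff] using norm_s_le x ((0 : 𝕜) • z)
    rcases eq_or_ne (r z) 0 with hrz | hrz
    · simp [s, hr a ha, hrz]
    have hca : c (a • z) = a * c z := smul_left_injective 𝕜 hrz <| by
      change c (a • z) • r z = (a * c z) • r z
      rw [← hr a ha z, (hc _).2, hr a ha z, mul_smul, (hc z).2]
    simp only [s, hr a ha, hca, map_mul]
    ring
  · have hgz : g (r z) z = c z * ‖r z‖ := by
      calc g (r z) z = g (r z) (c z • r z) := by rw [(hc z).2]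
        _ = c z * ‖r z‖ := by rw [map_smul, hg_apply, smul_eq_mul]
    simp only [s, hgz, norm_eq z]
    push_cast
    linear_combination (‖r z‖ ^ 2 : 𝕜) * RCLike.conj_mul (c z)

namespace ContinuousMultilinearMap

variable {𝕜 ι : Type*} [RCLike 𝕜] [Fintype ι] {E : ι → Type*}
  [∀ i, NormedAddCommGroup (E i)] [∀ i, NormedSpace 𝕜 (E i)]
  {G : Type*} [NormedAddCommGroup G] [NormedSpace 𝕜 G]

theorem norm_apply_le_of_forall_norm_eq_one (f : ContinuousMultilinearMap 𝕜 E G) {m : ∀ i, E i}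
    (hm : ∀ i, ‖m i‖ = 1) : ‖f m‖ ≤ ‖f‖ :=
  f.unit_le_opNorm ((pi_norm_le_iff_of_nonneg zero_le_one).2 fun i => (hm i).le)

theorem opNorm_le_of_unit_norm {f : ContinuousMultilinearMap 𝕜 E G} {C : ℝ} (hC : 0 ≤ C)
    (hf : ∀ m : ∀ i, E i, (∀ i, ‖m i‖ = 1) → ‖f m‖ ≤ C) : ‖f‖ ≤ C := by
  refine f.opNorm_le_bound hC fun m => ?_
  by_cases hm : ∃ i, m i = 0
  · obtain ⟨i, hi⟩ := hm
    rw [f.map_coord_zero i hi, norm_zero]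
    positivity
  simp only [not_exists] at hm
  have hm' i : (‖m i‖ : 𝕜) ≠ 0 := RCLike.ofReal_ne_zero.2 (norm_ne_zero_iff.2 (hm i))
  have hu i : ‖(‖m i‖ : 𝕜)⁻¹ • m i‖ = 1 := by
    rw [norm_smul, norm_inv, RCLike.norm_ofReal, abs_norm,
      inv_mul_cancel₀ (norm_ne_zero_iff.2 (hm i))]
  have hm_eq : m = fun i => (‖m i‖ : 𝕜) • (‖m i‖ : 𝕜)⁻¹ • m i := by
    funext i
    rw [smul_smul, mul_inv_cancel₀ (hm' i), one_smul]
  calc ‖f m‖ = (∏ i, ‖m i‖) * ‖f fun i => (‖m i‖ : 𝕜)⁻¹ • m i‖ := by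
        conv_lhs => rw [hm_eq, f.map_smul_univ]
        simp only [norm_smul, norm_prod, RCLike.norm_ofReal, abs_norm]
    _ ≤ (∏ i, ‖m i‖) * C := by gcongr; exact hf _ hu
    _ = C * ∏ i, ‖m i‖ := mul_comm _ _

theorem exists_tendsto_norm_apply_opNorm {f : ContinuousMultilinearMap 𝕜 E G} (hf : f ≠ 0) :
    ∃ x : ℕ → ∀ i, E i, (∀ n i, ‖x n i‖ = 1) ∧ Tendsto (fun n => ‖f (x n)‖) atTop (𝓝 ‖f‖) := by
  set S := (fun m => ‖f m‖) '' {m | ∀ i, ‖m i‖ = 1}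
  have hS : S.Nonempty := by
    by_contra h
    rw [Set.not_nonempty_iff_eq_empty, Set.image_eq_empty, Set.eq_empty_iff_forall_notMem] at h
    exact hf (norm_le_zero_iff.1 (opNorm_le_of_unit_norm le_rfl fun m hm => absurd hm (h m)))
  have hlub : IsLUB S ‖f‖ := by
    refine ⟨?_, fun b hb => ?_⟩
    · rintro _ ⟨m, hm, rfl⟩
      exact f.norm_apply_le_of_forall_norm_eq_one hm
    · obtain ⟨_, m, hm, rfl⟩ := hS
      exact opNorm_le_of_unit_norm ((norm_nonneg _).trans (hb ⟨m, hm, rfl⟩))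
        fun m hm => hb ⟨m, hm, rfl⟩
  obtain ⟨u, -, -, hu_lim, hu_mem⟩ := hlub.exists_seq_monotone_tendsto hS
  choose x hx hxu using hu_mem
  exact ⟨x, hx, by simpa only [hxu] using hu_lim⟩

end ContinuousMultilinearMap

theorem norm_le_norm_add_smul_of_tendsto_sip {𝕜 ι : Type*} [RCLike 𝕜] [Fintype ι] {E : ι → Type*}
    [∀ i, NormedAddCommGroup (E i)] [∀ i, NormedSpace 𝕜 (E i)]
    {G : Type*} [NormedAddCommGroup G] [NormedSpace 𝕜 G]
    {T A : ContinuousMultilinearMap 𝕜 E G} {x : ℕ → ∀ i, E i} (hx : ∀ n i, ‖x n i‖ = 1)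
    (hxT : Tendsto (fun n => ‖T (x n)‖) atTop (𝓝 ‖T‖)) (sip : ℕ → SIP 𝕜 G)
    (hA : Tendsto (fun n => (sip n).toFun (A (x n)) (T (x n))) atTop (𝓝 0)) (lam : 𝕜) :
    ‖T‖ ≤ ‖T + lam • A‖ := by
  have hlim : Tendsto (fun n => (sip n).toFun ((T + lam • A) (x n)) (T (x n))) atTop
      (𝓝 ((‖T‖ : 𝕜) ^ 2)) := by
    have hTT := ((RCLike.continuous_ofReal (K := 𝕜)).tendsto _ |>.comp hxT).pow 2
    simpa [SIP.add_left, SIP.smul_left, SIP.norm_compat] using hTT.add (hA.const_mul lam)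
  have hbound n : ‖(sip n).toFun ((T + lam • A) (x n)) (T (x n))‖ ≤ ‖T + lam • A‖ * ‖T (x n)‖ :=
    ((sip n).cauchy_schwarz _ _).trans <| mul_le_mul_of_nonneg_right
      ((T + lam • A).norm_apply_le_of_forall_norm_eq_one (hx n)) (norm_nonneg _)
  have hsq : ‖T‖ * ‖T‖ ≤ ‖T + lam • A‖ * ‖T‖ :=
    le_of_tendsto_of_tendsto' (by simpa [sq] using hlim.norm) (hxT.const_mul _) hbound
  rcases (norm_nonneg T).eq_or_lt with hT | hT
  · exact hT ▸ norm_nonneg _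
  · exact le_of_mul_le_mul_right hsq hT

theorem stmt14 {𝕜 : Type*} [RCLike 𝕜] {k : ℕ} {X : Fin k → Type*}
    [∀ i, NormedAddCommGroup (X i)] [∀ i, NormedSpace 𝕜 (X i)]
    {Y : Type*} [NormedAddCommGroup Y] [NormedSpace 𝕜 Y]
    (T : ContinuousMultilinearMap 𝕜 X Y) (hT : T ≠ 0)
    (hyp : ∀ A : ContinuousMultilinearMap 𝕜 X Y, (∀ lam : 𝕜, ‖T‖ ≤ ‖T + lam • A‖) →
      ∀ (x : ℕ → ∀ i, X i), (∀ n i, ‖x n i‖ = 1) →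
      Tendsto (fun n => ‖T (x n)‖) atTop (𝓝 ‖T‖) →
      ∀ sip : ℕ → SIP 𝕜 Y,
        Tendsto (fun n => (sip n).toFun (A (x n)) (T (x n))) atTop (𝓝 (0 : 𝕜))) :
    ∀ A₁ A₂ : ContinuousMultilinearMap 𝕜 X Y,
      (∀ lam : 𝕜, ‖T‖ ≤ ‖T + lam • A₁‖) → (∀ lam : 𝕜, ‖T‖ ≤ ‖T + lam • A₂‖) →
      (∀ lam : 𝕜, ‖T‖ ≤ ‖T + lam • (A₁ + A₂)‖) := by
  intro A₁ A₂ h₁ h₂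
  obtain ⟨x, hx, hxT⟩ := ContinuousMultilinearMap.exists_tendsto_norm_apply_opNorm hT
  let sip : ℕ → SIP 𝕜 Y := fun _ => Classical.arbitrary _
  refine norm_le_norm_add_smul_of_tendsto_sip hx hxT sip ?_
  simpa [SIP.add_left] using (hyp A₁ h₁ x hx hxT sip).add (hyp A₂ h₂ x hx hxT sip)
end

section
/- Let X_1, …, X_k, Y be finite-dimensional Banach spaces and T a nonzero bounded k-linear map. Suppose there exists x⃗₀ = (x_1,…,x_k) in the product of unit spheres such that M_T = { (μ^{(1)} x_1, …, μ^{(k)} x_k) : each μ^{(i)} unimodular } and T x⃗₀ is a smooth point of Y with unique support functional y₀*. Then for every bounded k-linear map A, the set Ω'(T,A) := { y*(A x⃗) : x⃗ ∈ M_T, y* ∈ J(T x⃗) } equals the singleton { y₀*(A x⃗₀) }. -/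
/-! A norm-attaining point of `T` has the form `(μ i • x₀ i)ᵢ` with unimodular `μ i`, so by
multilinearity `T` and `A` take there the values `c • T x₀` and `c • A x₀`, where `c = ∏ i, μ i`
is unimodular. Twisting a support functional `y` of `c • T x₀` by `c` yields a support functional
of `T x₀`, which is `y₀` by smoothness; hence `y (A x) = c * y (A x₀) = y₀ (A x₀)`. -/

section SupportFunctionals

variable (𝕜 : Type*) {Y : Type*} [RCLike 𝕜] [NormedAddCommGroup Y] [NormedSpace 𝕜 Y]

def supportFunctionals (z : Y) : Set (Y →L[𝕜] 𝕜) :=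
  {y | ‖y‖ = 1 ∧ y z = ‖z‖}

variable {𝕜}

theorem smul_mem_supportFunctionals {c : 𝕜} (hc : ‖c‖ = 1) {z : Y} {y : Y →L[𝕜] 𝕜}
    (hy : y ∈ supportFunctionals 𝕜 (c • z)) : c • y ∈ supportFunctionals 𝕜 z := by
  obtain ⟨hy_norm, hy_apply⟩ := hy
  refine ⟨by rw [norm_smul, hc, hy_norm, one_mul], ?_⟩
  calc (c • y) z = y (c • z) := (map_smul y c z).symm
    _ = ‖c • z‖ := hy_apply
    _ = ‖z‖ := by rw [norm_smul, hc, one_mul]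

end SupportFunctionals

theorem stmt17_general {𝕜 : Type*} [RCLike 𝕜] {k : ℕ} {X : Fin k → Type*}
    [∀ i, NormedAddCommGroup (X i)] [∀ i, NormedSpace 𝕜 (X i)]
    {Y : Type*} [NormedAddCommGroup Y] [NormedSpace 𝕜 Y]
    (T : ContinuousMultilinearMap 𝕜 X Y)
    (x₀ : ∀ i, X i)
    (hM : {x : ∀ i, X i | (∀ i, ‖x i‖ = 1) ∧ ‖T x‖ = ‖T‖}
        = {x : ∀ i, X i | ∃ μ : Fin k → 𝕜, (∀ i, ‖μ i‖ = 1) ∧ x = fun i => μ i • x₀ i})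
    (y₀ : Y →L[𝕜] 𝕜) (hy₀ : ‖y₀‖ = 1 ∧ y₀ (T x₀) = (‖T x₀‖ : 𝕜))
    (huniq : ∀ y : Y →L[𝕜] 𝕜, ‖y‖ = 1 ∧ y (T x₀) = (‖T x₀‖ : 𝕜) → y = y₀) :
    ∀ A : ContinuousMultilinearMap 𝕜 X Y,
      {lam : 𝕜 | ∃ (x : ∀ i, X i) (y : Y →L[𝕜] 𝕜),
        (∀ i, ‖x i‖ = 1) ∧ ‖T x‖ = ‖T‖ ∧ ‖y‖ = 1 ∧
        y (T x) = (‖T x‖ : 𝕜) ∧ lam = y (A x)} = {y₀ (A x₀)} := by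
  intro A
  ext lam
  constructor
  · rintro ⟨x, y, hx_norm, hTx_norm, hy_norm, hy_apply, rfl⟩
    obtain ⟨μ, hμ, rfl⟩ : ∃ μ : Fin k → 𝕜, (∀ i, ‖μ i‖ = 1) ∧ x = fun i => μ i • x₀ i :=
      (Set.ext_iff.1 hM _).1 ⟨hx_norm, hTx_norm⟩
    have hc : ‖∏ i, μ i‖ = 1 := by simp [norm_prod, hμ]
    rw [T.map_smul_univ] at hy_apply
    have hy₀_eq : (∏ i, μ i) • y = y₀ :=
      huniq _ (smul_mem_supportFunctionals hc ⟨hy_norm, hy_apply⟩)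
    rw [Set.mem_singleton_iff, A.map_smul_univ, ← hy₀_eq]
    exact map_smul y _ _
  · rintro rfl
    have hx₀_mem : (∀ i, ‖x₀ i‖ = 1) ∧ ‖T x₀‖ = ‖T‖ :=
      (Set.ext_iff.1 hM x₀).2 ⟨1, fun _ => norm_one, by simp⟩
    exact ⟨x₀, y₀, hx₀_mem.1, hx₀_mem.2, hy₀.1, hy₀.2, rfl⟩

theorem stmt17 {𝕜 : Type*} [RCLike 𝕜] {k : ℕ} {X : Fin k → Type*}
    [∀ i, NormedAddCommGroup (X i)] [∀ i, NormedSpace 𝕜 (X i)]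
    [∀ i, FiniteDimensional 𝕜 (X i)]
    {Y : Type*} [NormedAddCommGroup Y] [NormedSpace 𝕜 Y] [FiniteDimensional 𝕜 Y]
    (T : ContinuousMultilinearMap 𝕜 X Y) (hT : T ≠ 0)
    (x₀ : ∀ i, X i) (hx₀ : ∀ i, ‖x₀ i‖ = 1)
    (hM : {x : ∀ i, X i | (∀ i, ‖x i‖ = 1) ∧ ‖T x‖ = ‖T‖}
        = {x : ∀ i, X i | ∃ μ : Fin k → 𝕜, (∀ i, ‖μ i‖ = 1) ∧ x = fun i => μ i • x₀ i})
    (y₀ : Y →L[𝕜] 𝕜) (hy₀ : ‖y₀‖ = 1 ∧ y₀ (T x₀) = (‖T x₀‖ : 𝕜))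
    (huniq : ∀ y : Y →L[𝕜] 𝕜, ‖y‖ = 1 ∧ y (T x₀) = (‖T x₀‖ : 𝕜) → y = y₀) :
    ∀ A : ContinuousMultilinearMap 𝕜 X Y,
      {lam : 𝕜 | ∃ (x : ∀ i, X i) (y : Y →L[𝕜] 𝕜),
        (∀ i, ‖x i‖ = 1) ∧ ‖T x‖ = ‖T‖ ∧ ‖y‖ = 1 ∧
        y (T x) = (‖T x‖ : 𝕜) ∧ lam = y (A x)} = {y₀ (A x₀)} :=
  stmt17_general T x₀ hM y₀ hy₀ huniq
end
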